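/- Let D ∈ [0,1]^{n×n} be a doubly stochastic matrix and let 𝒢 be the set of n×n permutation matrices satisfying a given family of (L,U)-group-fairness constraints (for arbitrary fixed blocks B_1,…,B_q partitioning {1,…,n}, groups G_1,…,G_p ⊆ {1,…,n}, and matrices L,U ∈ ℤ^{q×p}). Then the following are equivalent: (a) there exists a permutation matrix R ∈ 𝒢 such that R_{ij} = 1 implies D_{ij} > 0 for all i,j; (b) there exists a finitely supported probability distribution 𝓓 over n×n permutation matrices whose expectation (entrywise marginal) equals D and which assigns strictly positive probability to the set 𝒢. -/

import Mathlib

open Finset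

noncomputable section
open scoped Classical

/-- An `n×n` permutation matrix (as a real matrix with 0/1 entries). -/
def IsPermMatrix (n : ℕ) (P : Matrix (Fin n) (Fin n) ℝ) : Prop :=
  (∀ i j, P i j = 0 ∨ P i j = 1) ∧
  (∀ i, ∑ j, P i j = 1) ∧
  (∀ j, ∑ i, P i j = 1)

/-- The (L,U)-group-fairness constraints. -/
def GroupFair {n q p : ℕ} (B : Fin q → Finset (Fin n)) (G : Fin p → Finset (Fin n))
    (L U : Fin q → Fin p → ℤ) (R : Matrix (Fin n) (Fin n) ℝ) : Prop :=
  ∀ (j : Fin q) (ℓ : Fin p),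
    (L j ℓ : ℝ) ≤ (∑ i ∈ G ℓ, ∑ t ∈ B j, R i t) ∧
      (∑ i ∈ G ℓ, ∑ t ∈ B j, R i t) ≤ (U j ℓ : ℝ)

lemma permMatrix_entry {n : ℕ} (σ : Equiv.Perm (Fin n)) (i j : Fin n) :
    σ.permMatrix ℝ i j = if σ i = j then 1 else 0 := by
  simp [Equiv.Perm.permMatrix, PEquiv.toMatrix_apply, Equiv.toPEquiv_apply, eq_comm]

lemma isPermMatrix_permMatrix {n : ℕ} (σ : Equiv.Perm (Fin n)) :
    IsPermMatrix n (σ.permMatrix ℝ) := by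
  have hd := permMatrix_mem_doublyStochastic (R := ℝ) (σ := σ)
  refine ⟨fun i j => ?_, fun i => sum_row_of_mem_doublyStochastic hd i,
    fun j => sum_col_of_mem_doublyStochastic hd j⟩
  rw [permMatrix_entry]
  split <;> simp

/-- For a doubly stochastic `D ∈ [0,1]^{n×n}`, there is a group-fair
permutation matrix `R` supported inside the support of `D` (i.e. `R_{ij} = 1 → D_{ij} > 0`)
iff there is a finitely supported distribution over permutation matrices with marginal `D`
assigning strictly positive probability to the group-fair ones. -/
theorem statement_11 (n q p : ℕ)
    (B : Fin q → Finset (Fin n)) (hBpart : ∀ t : Fin n, ∃! j, t ∈ B j)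
    (G : Fin p → Finset (Fin n))
    (L U : Fin q → Fin p → ℤ)
    (D : Matrix (Fin n) (Fin n) ℝ)
    (hD01 : ∀ i j, 0 ≤ D i j ∧ D i j ≤ 1)
    (hrow : ∀ i, ∑ j, D i j = 1) (hcol : ∀ j, ∑ i, D i j = 1) :
    (∃ R : Matrix (Fin n) (Fin n) ℝ, IsPermMatrix n R ∧ GroupFair B G L U R ∧
        ∀ i j, R i j = 1 → 0 < D i j) ↔
      (∃ (N : ℕ) (w : Fin N → ℝ) (P : Fin N → Matrix (Fin n) (Fin n) ℝ),
        (∀ t, 0 ≤ w t) ∧ (∑ t, w t = 1) ∧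
        (∀ t, IsPermMatrix n (P t)) ∧
        (∀ i j, D i j = ∑ t, if P t i j = 1 then w t else 0) ∧
        0 < ∑ t, if GroupFair B G L U (P t) then w t else 0) := by
  constructor
  · rintro ⟨R, hR, hGF, hsupp⟩
    rcases Nat.eq_zero_or_pos n with hn | hn
    · subst hn
      refine ⟨1, fun _ => 1, fun _ => R, fun _ => zero_le_one, by simp, fun _ => hR,
        fun i => i.elim0, by simp [hGF]⟩
    · -- main case: n > 0
      have hne : (Finset.univ : Finset (Fin n × Fin n)).Nonempty :=
        ⟨(⟨0, hn⟩, ⟨0, hn⟩), mem_univ _⟩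
      set f : Fin n × Fin n → ℝ := fun ij => if R ij.1 ij.2 = 1 then D ij.1 ij.2 else 1 with hf
      set ε : ℝ := min (Finset.univ.inf' hne f) (1/2) with hε
      have hεpos : 0 < ε := by
        refine lt_min ?_ (by norm_num)
        rw [Finset.lt_inf'_iff]
        intro ij _
        simp only [hf]
        split
        · exact hsupp _ _ (by assumption)
        · norm_num
      have hεle : ε ≤ 1/2 := min_le_right _ _
      have h1ε : 0 < 1 - ε := by linarith
      have hεD : ∀ i j, R i j = 1 → ε ≤ D i j := by
        intro i j h
        refine le_trans (min_le_left _ _) ?_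
        have := Finset.inf'_le f (Finset.mem_univ (i, j))
        refine le_trans this ?_
        simp [hf, h]
      set M : Matrix (Fin n) (Fin n) ℝ := (1 - ε)⁻¹ • (D - ε • R) with hMdef
      have hMij : ∀ i j, M i j = (1 - ε)⁻¹ * (D i j - ε * R i j) := by
        intro i j; simp [hMdef, Matrix.sub_apply]
      have hM : M ∈ doublyStochastic ℝ (Fin n) := by
        rw [mem_doublyStochastic_iff_sum]
        refine ⟨fun i j => ?_, fun i => ?_, fun j => ?_⟩
        · rw [hMij]
          apply mul_nonneg (inv_nonneg.2 h1ε.le)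
          rcases hR.1 i j with h | h
          · rw [h]; simpa using (hD01 i j).1
          · rw [h]; have := hεD i j h; linarith
        · simp only [hMij]
          rw [← Finset.mul_sum, Finset.sum_sub_distrib, ← Finset.mul_sum, hrow, hR.2.1]
          field_simp
        · simp only [hMij]
          rw [← Finset.mul_sum, Finset.sum_sub_distrib, ← Finset.mul_sum, hcol, hR.2.2]
          field_simp
      obtain ⟨w, hw0, hw1, hwsum⟩ := exists_eq_sum_perm_of_mem_doublyStochastic hM
      set m := Fintype.card (Equiv.Perm (Fin n)) with hm
      set e : Equiv.Perm (Fin n) ≃ Fin m := Fintype.equivFin (Equiv.Perm (Fin n)) with he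
      set w' : Fin (m + 1) → ℝ :=
        fun t => Fin.lastCases ε (fun k => (1 - ε) * w (e.symm k)) t with hw'
      set P' : Fin (m + 1) → Matrix (Fin n) (Fin n) ℝ :=
        fun t => Fin.lastCases R (fun k => (e.symm k).permMatrix ℝ) t with hP'
      have hw'last : w' (Fin.last m) = ε := by simp [hw']
      have hw'cast : ∀ k, w' (Fin.castSucc k) = (1 - ε) * w (e.symm k) := by
        intro k; simp [hw']
      have hP'last : P' (Fin.last m) = R := by simp [hP']
      have hP'cast : ∀ k, P' (Fin.castSucc k) = (e.symm k).permMatrix ℝ := by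
        intro k; simp [hP']
      have hw'0 : ∀ t, 0 ≤ w' t := by
        intro t
        refine Fin.lastCases ?_ ?_ t
        · rw [hw'last]; exact hεpos.le
        · intro k; rw [hw'cast]; exact mul_nonneg h1ε.le (hw0 _)
      have hP'perm : ∀ t, IsPermMatrix n (P' t) := by
        intro t
        refine Fin.lastCases ?_ ?_ t
        · rw [hP'last]; exact hR
        · intro k; rw [hP'cast]; exact isPermMatrix_permMatrix _
      refine ⟨m + 1, w', P', hw'0, ?_, hP'perm, ?_, ?_⟩
      · rw [Fin.sum_univ_castSucc, hw'last]
        simp only [hw'cast]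
        rw [← Finset.mul_sum, Equiv.sum_comp e.symm (fun σ => w σ), hw1]
        ring
      · intro i j
        have hterm : ∀ t, (if P' t i j = 1 then w' t else 0) = w' t * P' t i j := by
          intro t
          rcases (hP'perm t).1 i j with h | h <;> simp [h]
        rw [Finset.sum_congr rfl (fun t _ => hterm t), Fin.sum_univ_castSucc, hw'last, hP'last]
        simp only [hw'cast, hP'cast]
        have hMentry : M i j = ∑ σ : Equiv.Perm (Fin n), w σ * σ.permMatrix ℝ i j := by
          have := congrFun (congrFun hwsum i) j
          simpa [Matrix.sum_apply] using this.symm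
        have hsum : ∑ k : Fin m, (1 - ε) * w (e.symm k) * (e.symm k).permMatrix ℝ i j
            = (1 - ε) * M i j := by
          rw [hMentry, Finset.mul_sum]
          rw [← Equiv.sum_comp e.symm (fun σ => (1 - ε) * (w σ * σ.permMatrix ℝ i j))]
          exact Finset.sum_congr rfl (fun k _ => by ring)
        rw [hsum, hMij]
        field_simp
        ring
      · have hle : (if GroupFair B G L U (P' (Fin.last m)) then w' (Fin.last m) else 0)
            ≤ ∑ t, if GroupFair B G L U (P' t) then w' t else 0 := by
          refine Finset.single_le_sum
            (f := fun t => if GroupFair B G L U (P' t) then w' t else 0)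
            (fun t _ => ?_) (Finset.mem_univ _)
          split
          · exact hw'0 t
          · exact le_refl 0
        rw [hP'last, hw'last, if_pos hGF] at hle
        linarith
  · rintro ⟨N, w, P, hw0, hw1, hPM, hmarg, hpos⟩
    have : ∃ t0, 0 < if GroupFair B G L U (P t0) then w t0 else 0 := by
      by_contra h
      push_neg at h
      have : ∑ t, (if GroupFair B G L U (P t) then w t else 0) ≤ 0 :=
        Finset.sum_nonpos (fun t _ => h t)
      linarith
    obtain ⟨t0, ht0⟩ := this
    have hGF : GroupFair B G L U (P t0) := by
      by_contra h; rw [if_neg h] at ht0; exact lt_irrefl 0 ht0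
    rw [if_pos hGF] at ht0
    refine ⟨P t0, hPM t0, hGF, fun i j hij => ?_⟩
    rw [hmarg i j]
    have hle : (if P t0 i j = 1 then w t0 else 0) ≤ ∑ t, if P t i j = 1 then w t else 0 := by
      refine Finset.single_le_sum
        (f := fun t => if P t i j = 1 then w t else 0)
        (fun t _ => ?_) (Finset.mem_univ _)
      split
      · exact hw0 t
      · exact le_refl 0
    rw [if_pos hij] at hle
    linarith

end
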